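/- On ℝ³ with coordinates (x, y, z), let v(x,y,z) = ∫₀^x e^{−t²/2} dt and f(x,y,z) = −x²/2. Then v is f-harmonic, i.e. Δv − ⟨∇f, ∇v⟩ = 0, and its Hessian satisfies |Hess v|² ≡ |∇|∇v||² at every point; in particular no refined Kato inequality |Ddv|² − |∇|dv||² ≥ K|∇|dv||² with a constant K > 0 can hold for general f-harmonic maps. -/

import Mathlib

open MeasureTheory

noncomputable section

/-- The partial derivative in the `i`-th coordinate direction on `ℝ³`. -/
def pd (i : Fin 3) (g : EuclideanSpace ℝ (Fin 3) → ℝ) (p : EuclideanSpace ℝ (Fin 3)) : ℝ :=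
  fderiv ℝ g p (EuclideanSpace.single i 1)

/-- The Laplacian on `ℝ³`. -/
def lap (g : EuclideanSpace ℝ (Fin 3) → ℝ) (p : EuclideanSpace ℝ (Fin 3)) : ℝ :=
  ∑ i : Fin 3, pd i (pd i g) p

/-- The inner product `⟨∇f, ∇g⟩` of gradients on `ℝ³`. -/
def gradInner (f g : EuclideanSpace ℝ (Fin 3) → ℝ) (p : EuclideanSpace ℝ (Fin 3)) : ℝ :=
  ∑ i : Fin 3, pd i f p * pd i g p

/-- The squared Hilbert–Schmidt norm `|Hess g|²` on `ℝ³`. -/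
def hessNormSq (g : EuclideanSpace ℝ (Fin 3) → ℝ) (p : EuclideanSpace ℝ (Fin 3)) : ℝ :=
  ∑ i : Fin 3, ∑ j : Fin 3, (pd i (pd j g) p) ^ 2

/-- The quantity `|∇|∇g||²` on `ℝ³`. -/
def gradNormGradSq (g : EuclideanSpace ℝ (Fin 3) → ℝ) (p : EuclideanSpace ℝ (Fin 3)) : ℝ :=
  ∑ i : Fin 3, (pd i (fun y => Real.sqrt (∑ j : Fin 3, (pd j g y) ^ 2)) p) ^ 2

lemma hasDerivAt_G (x : ℝ) :
    HasDerivAt (fun t : ℝ => Real.exp (-t ^ 2 / 2)) (-x * Real.exp (-x ^ 2 / 2)) x := by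
  have h1 : HasDerivAt (fun t : ℝ => -t ^ 2 / 2) (-x) x := by
    have : HasDerivAt (fun t : ℝ => -t ^ 2 / 2) (-(((2:ℕ):ℝ) * x ^ (2 - 1)) / 2) x :=
      ((hasDerivAt_pow 2 x).neg).div_const 2
    convert this using 1
    ring
  have := h1.exp
  convert this using 1
  ring

lemma hasDerivAt_h (x : ℝ) :
    HasDerivAt (fun t : ℝ => -t ^ 2 / 2) (-x) x := by
  have : HasDerivAt (fun t : ℝ => -t ^ 2 / 2) (-(((2:ℕ):ℝ) * x ^ (2 - 1)) / 2) x :=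
    ((hasDerivAt_pow 2 x).neg).div_const 2
  convert this using 1
  ring

lemma contG : Continuous (fun t : ℝ => Real.exp (-t ^ 2 / 2)) := by
  continuity

lemma hasDerivAt_F (x : ℝ) :
    HasDerivAt (fun u : ℝ => ∫ t in (0:ℝ)..u, Real.exp (-t ^ 2 / 2)) (Real.exp (-x ^ 2 / 2)) x :=
  intervalIntegral.integral_hasDerivAt_right (contG.intervalIntegrable _ _)
    contG.aestronglyMeasurable.stronglyMeasurableAtFilter contG.continuousAt

lemma pd_comp (φ φ' : ℝ → ℝ) (h : ∀ x, HasDerivAt φ (φ' x) x)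
    (i : Fin 3) (p : EuclideanSpace ℝ (Fin 3)) :
    pd i (fun q : EuclideanSpace ℝ (Fin 3) => φ (q 0)) p
      = if i = 0 then φ' (p 0) else 0 := by
  have hp : HasFDerivAt (fun q : EuclideanSpace ℝ (Fin 3) => φ (q 0))
      (((1 : ℝ →L[ℝ] ℝ).smulRight (φ' (p 0))).comp (EuclideanSpace.proj (0 : Fin 3))) p := by
    have hproj : HasFDerivAt (fun q : EuclideanSpace ℝ (Fin 3) => q 0)
        (EuclideanSpace.proj (0 : Fin 3) : EuclideanSpace ℝ (Fin 3) →L[ℝ] ℝ) p :=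
      (EuclideanSpace.proj (0 : Fin 3) : EuclideanSpace ℝ (Fin 3) →L[ℝ] ℝ).hasFDerivAt
    exact ((h (p 0)).hasFDerivAt).comp p hproj
  rw [pd, hp.fderiv]
  simp [PiLp.proj_apply, EuclideanSpace.single_apply]
  rcases eq_or_ne i 0 with h0 | h0 <;> simp [h0, eq_comm]

lemma pd_zero_fun (i : Fin 3) (p : EuclideanSpace ℝ (Fin 3)) :
    pd i (fun _ : EuclideanSpace ℝ (Fin 3) => (0 : ℝ)) p = 0 := by
  simp [pd]

/-- Remark 4.2: on `ℝ³`, the function `v(x,y,z) = ∫₀ˣ e^{-t²/2} dt` is `f`-harmonic for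
`f(x,y,z) = -x²/2`, and satisfies `|Hess v|² ≡ |∇|∇v||²`; in particular no refined Kato
inequality `|Ddv|² - |∇|dv||² ≥ K |∇|dv||²` with a constant `K > 0` can hold for general
`f`-harmonic maps. -/
theorem no_refined_kato_for_fharmonic
    (v f : EuclideanSpace ℝ (Fin 3) → ℝ)
    (hv : v = fun p => ∫ t in (0 : ℝ)..(p 0), Real.exp (-t ^ 2 / 2))
    (hf : f = fun p => -(p 0) ^ 2 / 2) :
    (∀ p : EuclideanSpace ℝ (Fin 3), lap v p - gradInner f v p = 0) ∧
    (∀ p : EuclideanSpace ℝ (Fin 3), hessNormSq v p = gradNormGradSq v p) ∧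
    ¬ ∃ K : ℝ, 0 < K ∧ ∀ p : EuclideanSpace ℝ (Fin 3),
        K * gradNormGradSq v p ≤ hessNormSq v p - gradNormGradSq v p := by
  subst hv hf
  have h1 : ∀ (i : Fin 3) (p : EuclideanSpace ℝ (Fin 3)),
      pd i (fun p => ∫ t in (0 : ℝ)..(p 0), Real.exp (-t ^ 2 / 2)) p
        = if i = 0 then Real.exp (-(p 0) ^ 2 / 2) else 0 := fun i p =>
    pd_comp _ _ hasDerivAt_F i p
  have hpd0 : pd 0 (fun p => ∫ t in (0 : ℝ)..(p 0), Real.exp (-t ^ 2 / 2))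
      = fun y : EuclideanSpace ℝ (Fin 3) => Real.exp (-(y 0) ^ 2 / 2) := by
    funext y; rw [h1]; simp
  have hpd1 : pd 1 (fun p => ∫ t in (0 : ℝ)..(p 0), Real.exp (-t ^ 2 / 2))
      = fun _ : EuclideanSpace ℝ (Fin 3) => (0 : ℝ) := by
    funext y; rw [h1]; simp
  have hpd2 : pd 2 (fun p => ∫ t in (0 : ℝ)..(p 0), Real.exp (-t ^ 2 / 2))
      = fun _ : EuclideanSpace ℝ (Fin 3) => (0 : ℝ) := by
    funext y; rw [h1]; simp
  have h2 : ∀ (i : Fin 3) (p : EuclideanSpace ℝ (Fin 3)),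
      pd i (fun y : EuclideanSpace ℝ (Fin 3) => Real.exp (-(y 0) ^ 2 / 2)) p
        = if i = 0 then -(p 0) * Real.exp (-(p 0) ^ 2 / 2) else 0 := fun i p =>
    pd_comp _ _ hasDerivAt_G i p
  have h3 : ∀ (i : Fin 3) (p : EuclideanSpace ℝ (Fin 3)),
      pd i (fun p : EuclideanSpace ℝ (Fin 3) => -(p 0) ^ 2 / 2) p
        = if i = 0 then -(p 0) else 0 := fun i p =>
    pd_comp _ _ hasDerivAt_h i p
  have h10 : (1 : Fin 3) ≠ 0 := by decide
  have h20 : (2 : Fin 3) ≠ 0 := by decide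
  have hs : (fun y : EuclideanSpace ℝ (Fin 3) => Real.sqrt
      (∑ j : Fin 3, (pd j (fun p => ∫ t in (0 : ℝ)..(p 0), Real.exp (-t ^ 2 / 2)) y) ^ 2))
      = fun y : EuclideanSpace ℝ (Fin 3) => Real.exp (-(y 0) ^ 2 / 2) := by
    funext y
    rw [Fin.sum_univ_three, h1, h1, h1, if_pos rfl, if_neg h10, if_neg h20]
    rw [show Real.exp (-(y 0) ^ 2 / 2) ^ 2 + (0:ℝ) ^ 2 + (0:ℝ) ^ 2
        = Real.exp (-(y 0) ^ 2 / 2) ^ 2 by ring]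
    exact Real.sqrt_sq (Real.exp_pos _).le
  have hgrad : ∀ p : EuclideanSpace ℝ (Fin 3),
      gradNormGradSq (fun p => ∫ t in (0 : ℝ)..(p 0), Real.exp (-t ^ 2 / 2)) p
        = (-(p 0) * Real.exp (-(p 0) ^ 2 / 2)) ^ 2 := by
    intro p
    rw [gradNormGradSq]
    simp only [hs]
    rw [Fin.sum_univ_three, h2, h2, h2, if_pos rfl, if_neg h10, if_neg h20]
    ring
  have hhess : ∀ p : EuclideanSpace ℝ (Fin 3),
      hessNormSq (fun p => ∫ t in (0 : ℝ)..(p 0), Real.exp (-t ^ 2 / 2)) p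
        = (-(p 0) * Real.exp (-(p 0) ^ 2 / 2)) ^ 2 := by
    intro p
    rw [hessNormSq]
    simp only [Fin.sum_univ_three, hpd0, hpd1, hpd2, h2, pd_zero_fun,
      if_pos rfl, if_neg h10, if_neg h20, if_true]
    ring
  refine ⟨?_, ?_, ?_⟩
  · intro p
    rw [lap, gradInner, Fin.sum_univ_three, Fin.sum_univ_three]
    simp only [hpd0, hpd1, hpd2, h2, h1, h3, pd_zero_fun,
      if_pos rfl, if_neg h10, if_neg h20, if_true]
    ring
  · intro p
    rw [hhess, hgrad]
  · rintro ⟨K, hK, hall⟩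
    set p : EuclideanSpace ℝ (Fin 3) := EuclideanSpace.single 0 1 with hp
    have hp0 : p 0 = 1 := by simp [hp, EuclideanSpace.single_apply]
    have := hall p
    rw [hhess, hgrad, hp0] at this
    have hpos : (0:ℝ) < (-(1:ℝ) * Real.exp (-(1:ℝ) ^ 2 / 2)) ^ 2 := by
      positivity
    nlinarith
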